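/- (Analytical lower bound for single-qubit non-stabilizerness by trace distance) Let ρ(r) = ½(I + r₁X + r₂Y + r₃Z) be a qubit density matrix with Bloch vector r ∈ ℝ³, ‖r‖₂ ≤ 1, satisfying 1 + r₁ + r₂ + r₃ ≤ 0. Then for every state σ in the single-qubit stabilizer polytope (the convex hull of ρ(±e₁), ρ(±e₂), ρ(±e₃)), the trace distance satisfies T(ρ(r), σ) ≥ −(1 + r₁ + r₂ + r₃)/(2√3). -/

import Mathlib

open ComplexOrder

noncomputable def traceNorm {n : Type*} [Fintype n] [DecidableEq n]
    (A : Matrix n n ℂ) : ℝ :=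
  ((((Matrix.posSemidef_conjTranspose_mul_self A).1.eigenvectorUnitary : Matrix n n ℂ) *
      Matrix.diagonal (((↑) : ℝ → ℂ) ∘ (√·) ∘ (Matrix.posSemidef_conjTranspose_mul_self A).1.eigenvalues) *
      (star (Matrix.posSemidef_conjTranspose_mul_self A).1.eigenvectorUnitary : Matrix n n ℂ))).trace.re

/-- Trace distance between matrices: half the trace norm of the difference. -/
noncomputable def traceDist {n : Type*} [Fintype n] [DecidableEq n]
    (ρ σ : Matrix n n ℂ) : ℝ :=
  traceNorm (ρ - σ) / 2

/-- A density matrix: positive semidefinite with trace one. -/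
def IsDensityMatrix {n : Type*} [Fintype n] [DecidableEq n]
    (ρ : Matrix n n ℂ) : Prop :=
  ρ.PosSemidef ∧ ρ.trace = 1

noncomputable def PauliX : Matrix (Fin 2) (Fin 2) ℂ := !![0, 1; 1, 0]
noncomputable def PauliY : Matrix (Fin 2) (Fin 2) ℂ := !![0, -Complex.I; Complex.I, 0]
noncomputable def PauliZ : Matrix (Fin 2) (Fin 2) ℂ := !![1, 0; 0, -1]

/-- The qubit density matrix with Bloch vector r. -/
noncomputable def blochMatrix (r : EuclideanSpace ℝ (Fin 3)) : Matrix (Fin 2) (Fin 2) ℂ :=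
  (1/2 : ℂ) • ((1 : Matrix (Fin 2) (Fin 2) ℂ) + (r 0 : ℂ) • PauliX
    + (r 1 : ℂ) • PauliY + (r 2 : ℂ) • PauliZ)

/-- The single-qubit stabilizer polytope: convex hull of the six eigenprojectors
of the Pauli matrices, i.e. of ρ(±e₁), ρ(±e₂), ρ(±e₃). -/
noncomputable def stabPolytope1 : Set (Matrix (Fin 2) (Fin 2) ℂ) :=
  convexHull ℝ (Set.range fun p : Fin 3 × Bool =>
    blochMatrix (EuclideanSpace.single p.1 (if p.2 then (1 : ℝ) else -1)))

open Matrix in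
lemma traceNorm_pauliLike (x y z : ℝ) :
    traceNorm !![(z:ℂ), (x:ℂ) - Complex.I*(y:ℂ); (x:ℂ) + Complex.I*(y:ℂ), -(z:ℂ)]
      = 2 * Real.sqrt (x^2+y^2+z^2) := by
  set A : Matrix (Fin 2) (Fin 2) ℂ :=
    !![(z:ℂ), (x:ℂ) - Complex.I*(y:ℂ); (x:ℂ) + Complex.I*(y:ℂ), -(z:ℂ)] with hA
  set c : ℝ := x^2+y^2+z^2 with hcdef
  have hc : 0 ≤ c := by positivity
  have hB : ((Real.sqrt c : ℂ) • (1 : Matrix (Fin 2) (Fin 2) ℂ)).PosSemidef := by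
    rw [smul_one_eq_diagonal]
    exact posSemidef_diagonal_iff.mpr fun i => Complex.zero_le_real.mpr (Real.sqrt_nonneg c)
  have h1 : Aᴴ * A = ((c:ℂ)) • (1 : Matrix (Fin 2) (Fin 2) ℂ) := by
    ext i j
    fin_cases i <;> fin_cases j <;>
      simp [hA, Matrix.mul_apply, Fin.sum_univ_two, Matrix.conjTranspose_apply,
        Matrix.one_apply, hcdef, Complex.ext_iff, ← Complex.ofReal_pow] <;> ring_nf <;> simp
  have hsq : ((Real.sqrt c : ℂ) • (1 : Matrix (Fin 2) (Fin 2) ℂ))^2 = Aᴴ * A := by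
    rw [h1, smul_pow, one_pow, ← Complex.ofReal_pow, Real.sq_sqrt hc]
  have hspec : spectrum ℝ (Aᴴ * A) = {c} := by
    rw [h1, show ((c:ℂ) • (1 : Matrix (Fin 2) (Fin 2) ℂ))
      = algebraMap ℝ (Matrix (Fin 2) (Fin 2) ℂ) c by
        rw [Algebra.algebraMap_eq_smul_one, Complex.coe_smul]]
    exact spectrum.scalar_eq c
  have hev : ∀ i, (Matrix.posSemidef_conjTranspose_mul_self A).1.eigenvalues i = c := by
    intro i
    have hm := (Matrix.posSemidef_conjTranspose_mul_self A).1.eigenvalues_mem_spectrum_real i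
    rw [hspec] at hm
    exact hm
  rw [traceNorm, Matrix.trace_mul_cycle]
  simp [hev, Matrix.trace_diagonal, Fin.sum_univ_two]

lemma blochMatrix_sub (r s : EuclideanSpace ℝ (Fin 3)) :
    blochMatrix r - blochMatrix s =
      !![((((r 2 - s 2)/2 : ℝ)):ℂ),
          (((r 0 - s 0)/2 : ℝ):ℂ) - Complex.I * (((r 1 - s 1)/2 : ℝ):ℂ);
         (((r 0 - s 0)/2 : ℝ):ℂ) + Complex.I * (((r 1 - s 1)/2 : ℝ):ℂ),
          -(((r 2 - s 2)/2 : ℝ):ℂ)] := by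
  ext i j
  fin_cases i <;> fin_cases j <;>
    simp [blochMatrix, PauliX, PauliY, PauliZ, Matrix.one_apply] <;> push_cast <;> ring

lemma traceNorm_bloch_sub (r s : EuclideanSpace ℝ (Fin 3)) :
    traceNorm (blochMatrix r - blochMatrix s)
      = Real.sqrt ((r 0 - s 0)^2 + (r 1 - s 1)^2 + (r 2 - s 2)^2) := by
  rw [blochMatrix_sub, traceNorm_pauliLike]
  rw [show ((r 0 - s 0)/2)^2 + ((r 1 - s 1)/2)^2 + ((r 2 - s 2)/2)^2
      = ((r 0 - s 0)^2 + (r 1 - s 1)^2 + (r 2 - s 2)^2) / 4 by ring]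
  rw [show ((r 0 - s 0)^2 + (r 1 - s 1)^2 + (r 2 - s 2)^2)/4
      = ((r 0 - s 0)^2 + (r 1 - s 1)^2 + (r 2 - s 2)^2) * (1/4) by ring,
    Real.sqrt_mul (by positivity), show Real.sqrt (1/4) = 1/2 by
      rw [show (1/4:ℝ) = (1/2)^2 by norm_num, Real.sqrt_sq (by norm_num)]]
  ring

noncomputable def blochAffine : EuclideanSpace ℝ (Fin 3) →ᵃ[ℝ] Matrix (Fin 2) (Fin 2) ℂ where
  toFun := blochMatrix
  linear :=
    { toFun := fun v => (1/2 : ℂ) • ((v 0 : ℂ) • PauliX + (v 1 : ℂ) • PauliY + (v 2 : ℂ) • PauliZ)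
      map_add' := by
        intro v w
        ext i j
        simp [Matrix.add_apply, Matrix.smul_apply, PiLp.add_apply]
        ring
      map_smul' := by
        intro a v
        ext i j
        simp [Matrix.smul_apply, PiLp.smul_apply, Complex.real_smul, smul_eq_mul]
        ring }
  map_vadd' := by
    intro p v
    ext i j
    simp [blochMatrix, Matrix.add_apply, Matrix.smul_apply, PiLp.add_apply, Matrix.one_apply]
    split_ifs <;> ring

noncomputable def vertexSet : Set (EuclideanSpace ℝ (Fin 3)) :=
  Set.range fun p : Fin 3 × Bool => EuclideanSpace.single p.1 (if p.2 then (1 : ℝ) else -1)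

lemma stab_mem_image {σ : Matrix (Fin 2) (Fin 2) ℂ} (hσ : σ ∈ stabPolytope1) :
    ∃ s ∈ convexHull ℝ vertexSet, σ = blochMatrix s := by
  have h : stabPolytope1 = blochAffine '' (convexHull ℝ vertexSet) := by
    rw [AffineMap.image_convexHull]
    unfold stabPolytope1 vertexSet
    congr 1
    rw [← Set.range_comp]
    rfl
  rw [h] at hσ
  obtain ⟨s, hs, h2⟩ := hσ
  exact ⟨s, hs, h2.symm⟩

lemma sum_ge_neg_one {s : EuclideanSpace ℝ (Fin 3)} (hs : s ∈ convexHull ℝ vertexSet) :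
    -1 ≤ s 0 + s 1 + s 2 := by
  have hsub : convexHull ℝ vertexSet ⊆
      {x : EuclideanSpace ℝ (Fin 3) | -1 ≤ x 0 + x 1 + x 2} := by
    apply convexHull_min
    · rintro _ ⟨⟨i, b⟩, rfl⟩
      fin_cases i <;> cases b <;>
        simp [EuclideanSpace.single_apply]
    · intro x hx y hy a b ha hb hab
      simp only [Set.mem_setOf_eq] at *
      have h1 : (a • x + b • y) 0 = a * x 0 + b * y 0 := by
        simp [PiLp.add_apply, PiLp.smul_apply]
      have h2 : (a • x + b • y) 1 = a * x 1 + b * y 1 := by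
        simp [PiLp.add_apply, PiLp.smul_apply]
      have h3 : (a • x + b • y) 2 = a * x 2 + b * y 2 := by
        simp [PiLp.add_apply, PiLp.smul_apply]
      rw [h1, h2, h3]
      nlinarith [mul_le_mul_of_nonneg_left hx ha, mul_le_mul_of_nonneg_left hy hb]
  exact hsub hs

lemma cauchy3 (a b c : ℝ) : a + b + c ≤ Real.sqrt 3 * Real.sqrt (a^2 + b^2 + c^2) := by
  rw [← Real.sqrt_mul (by norm_num)]
  rcases le_or_gt (a + b + c) 0 with h | h
  · exact h.trans (Real.sqrt_nonneg _)
  · rw [show a + b + c = Real.sqrt ((a+b+c)^2) by rw [Real.sqrt_sq h.le]]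
    apply Real.sqrt_le_sqrt
    nlinarith [sq_nonneg (a-b), sq_nonneg (b-c), sq_nonneg (a-c)]

/-- Analytical lower bound for the single-qubit non-stabilizerness by trace
distance: if 1 + r₁ + r₂ + r₃ ≤ 0, then every stabilizer state is at trace
distance at least −(1 + r₁ + r₂ + r₃)/(2√3) from ρ(r). -/
theorem ntd_lower_bound_qubit (r : EuclideanSpace ℝ (Fin 3)) (hr : ‖r‖ ≤ 1)
    (hviol : 1 + r 0 + r 1 + r 2 ≤ 0) :
    ∀ σ ∈ stabPolytope1,
      -(1 + r 0 + r 1 + r 2) / (2 * Real.sqrt 3) ≤ traceDist (blochMatrix r) σ := by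
  intro σ hσ
  obtain ⟨s, hs, rfl⟩ := stab_mem_image hσ
  rw [traceDist, traceNorm_bloch_sub]
  have hsum := sum_ge_neg_one hs
  have hcs := cauchy3 (s 0 - r 0) (s 1 - r 1) (s 2 - r 2)
  have heq : (s 0 - r 0)^2 + (s 1 - r 1)^2 + (s 2 - r 2)^2
      = (r 0 - s 0)^2 + (r 1 - s 1)^2 + (r 2 - s 2)^2 := by ring
  rw [heq] at hcs
  have h3 : (0:ℝ) < Real.sqrt 3 := Real.sqrt_pos.mpr (by norm_num)
  rw [div_le_div_iff₀ (by positivity) (by norm_num)]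
  calc -(1 + r 0 + r 1 + r 2) * 2
      ≤ ((s 0 - r 0) + (s 1 - r 1) + (s 2 - r 2)) * 2 := by nlinarith
    _ ≤ Real.sqrt 3 * Real.sqrt ((r 0 - s 0)^2 + (r 1 - s 1)^2 + (r 2 - s 2)^2) * 2 := by
        nlinarith
    _ = Real.sqrt ((r 0 - s 0)^2 + (r 1 - s 1)^2 + (r 2 - s 2)^2) * (2 * Real.sqrt 3) := by ring
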